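/- arXiv:2102.05174 — 3 statements merged into one kernel-verified Lean document; each statement's English description precedes it below -/
import Mathlib

section
/- Let n ≥ 1 and let S be a stabilizer group of n-qubit signed Pauli matrices. Then the matrix ρ_S := 2^{-n} · Σ_{Q ∈ S} Q is Hermitian, idempotent (ρ_S · ρ_S = ρ_S), has trace 1, and has rank 1; in particular ρ_S is the density matrix of a pure quantum state (a rank-one orthogonal projection). -/
/-! Every element of a stabilizer group `S` is a Hermitian involution, and every element other
than `±I` is traceless; since `-I ∉ S`, only `I` contributes to the trace of `∑ S`, which is
therefore `2^n`. Multiplication by any `Q ∈ S` permutes `S`, so `(∑ S)² = |S| • ∑ S = 2^n • ∑ S`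
and `ρ_S` is an idempotent of trace `1`. The rank of an idempotent matrix equals its trace. -/

open Matrix

noncomputable section

/-- The four single-qubit Pauli matrices: `I₂`, `X`, `Y`, `Z`. -/
def pauli : Fin 4 → Matrix (Fin 2) (Fin 2) ℂ
  | 0 => 1
  | 1 => !![0, 1; 1, 0]
  | 2 => !![0, -Complex.I; Complex.I, 0]
  | 3 => !![1, 0; 0, -1]

/-- The `n`-fold Kronecker product `A_{a 0} ⊗ ⋯ ⊗ A_{a (n-1)}` of single-qubit Pauli
matrices, realized as a matrix indexed by bit strings. -/
def pauliTensor {n : ℕ} (a : Fin n → Fin 4) :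
    Matrix (Fin n → Fin 2) (Fin n → Fin 2) ℂ :=
  fun z w => ∏ i, pauli (a i) (z i) (w i)

/-- A signed `n`-qubit Pauli matrix: `ε • (A₁ ⊗ ⋯ ⊗ Aₙ)` with `ε ∈ {1, -1}`. -/
def IsSignedPauli {n : ℕ} (M : Matrix (Fin n → Fin 2) (Fin n → Fin 2) ℂ) : Prop :=
  ∃ (ε : ℂ) (a : Fin n → Fin 4), (ε = 1 ∨ ε = -1) ∧ M = ε • pauliTensor a

/-- A stabilizer group: a set of signed `n`-qubit Pauli matrices containing the identity,
closed under multiplication, pairwise commuting, not containing `-I`, of size `2^n`. -/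
structure IsStabilizerGroup (n : ℕ)
    (S : Set (Matrix (Fin n → Fin 2) (Fin n → Fin 2) ℂ)) : Prop where
  mem_pauli : ∀ M ∈ S, IsSignedPauli M
  one_mem : (1 : Matrix (Fin n → Fin 2) (Fin n → Fin 2) ℂ) ∈ S
  mul_mem : ∀ M ∈ S, ∀ N ∈ S, M * N ∈ S
  mul_comm : ∀ M ∈ S, ∀ N ∈ S, M * N = N * M
  neg_one_not_mem : -(1 : Matrix (Fin n → Fin 2) (Fin n → Fin 2) ℂ) ∉ S
  card_eq : S.ncard = 2 ^ n

/-- The stabilizer state associated to a stabilizer group: `ρ_S = 2^{-n} Σ_{Q ∈ S} Q`. -/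
def stabState {n : ℕ} (S : Set (Matrix (Fin n → Fin 2) (Fin n → Fin 2) ℂ)) :
    Matrix (Fin n → Fin 2) (Fin n → Fin 2) ℂ :=
  ((2 : ℂ) ^ n)⁻¹ • ∑ᶠ Q ∈ S, Q

theorem Matrix.rank_eq_trace_of_isIdempotentElem {K m : Type*} [Field K] [Fintype m]
    [DecidableEq m] {A : Matrix m m K} (hA : IsIdempotentElem A) : (A.rank : K) = A.trace := by
  have hproj := LinearMap.IsIdempotentElem.isProj_range _ (hA.map toLinAlgEquiv')
  rw [← trace_toLin'_eq]
  exact hproj.trace.symm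

section PiKronecker

variable {ι m R : Type*} [Fintype ι]

def piKronecker [CommMonoid R] (A : ι → Matrix m m R) : Matrix (ι → m) (ι → m) R :=
  of fun z w => ∏ i, A i (z i) (w i)

@[simp]
theorem piKronecker_apply [CommMonoid R] (A : ι → Matrix m m R) (z w : ι → m) :
    piKronecker A z w = ∏ i, A i (z i) (w i) := rfl

theorem piKronecker_mul [DecidableEq ι] [Fintype m] [CommSemiring R] (A B : ι → Matrix m m R) :
    piKronecker A * piKronecker B = piKronecker (A * B) := by
  ext z w
  simp only [mul_apply, piKronecker_apply, Pi.mul_apply, Finset.prod_univ_sum,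
    Fintype.piFinset_univ, Finset.prod_mul_distrib]

theorem piKronecker_one [DecidableEq m] [CommSemiring R] :
    piKronecker (fun _ : ι => (1 : Matrix m m R)) = 1 := by
  ext z w
  simp only [piKronecker_apply, one_apply, Fintype.prod_boole, funext_iff]

theorem conjTranspose_piKronecker [CommSemiring R] [StarRing R] (A : ι → Matrix m m R) :
    (piKronecker A)ᴴ = piKronecker fun i => (A i)ᴴ := by
  ext z w
  simp [star_prod]

theorem trace_piKronecker [DecidableEq ι] [Fintype m] [CommSemiring R] (A : ι → Matrix m m R) :
    (piKronecker A).trace = ∏ i, (A i).trace := by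
  simp only [trace, diag, piKronecker_apply, Finset.prod_univ_sum, Fintype.piFinset_univ]

end PiKronecker

theorem pauli_conjTranspose (k : Fin 4) : (pauli k)ᴴ = pauli k := by
  fin_cases k <;> ext i j <;> fin_cases i <;> fin_cases j <;> simp [pauli]

theorem pauli_mul_self (k : Fin 4) : pauli k * pauli k = 1 := by
  fin_cases k <;> ext i j <;> fin_cases i <;> fin_cases j <;>
    simp [pauli, mul_apply, Fin.sum_univ_two, one_apply]

theorem trace_pauli_of_ne_zero {k : Fin 4} (hk : k ≠ 0) : (pauli k).trace = 0 := by
  fin_cases k <;> simp_all [pauli, trace, Fin.sum_univ_two]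

section Pauli

variable {n : ℕ}

theorem pauliTensor_eq_piKronecker (a : Fin n → Fin 4) :
    pauliTensor a = piKronecker (pauli ∘ a) := rfl

theorem pauliTensor_conjTranspose (a : Fin n → Fin 4) : (pauliTensor a)ᴴ = pauliTensor a := by
  simp only [pauliTensor_eq_piKronecker, conjTranspose_piKronecker, Function.comp_apply,
    pauli_conjTranspose]
  rfl

theorem pauliTensor_mul_self (a : Fin n → Fin 4) : pauliTensor a * pauliTensor a = 1 := by
  rw [pauliTensor_eq_piKronecker, piKronecker_mul, ← piKronecker_one]
  congr 1
  ext1 i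
  exact pauli_mul_self (a i)

theorem pauliTensor_zero : pauliTensor (0 : Fin n → Fin 4) = 1 :=
  piKronecker_one

theorem trace_pauliTensor_of_ne_zero {a : Fin n → Fin 4} (ha : a ≠ 0) :
    (pauliTensor a).trace = 0 := by
  obtain ⟨i, hi⟩ := Function.ne_iff.mp ha
  rw [pauliTensor_eq_piKronecker, trace_piKronecker]
  exact Finset.prod_eq_zero (Finset.mem_univ i) (trace_pauli_of_ne_zero hi)

namespace IsSignedPauli

variable {M : Matrix (Fin n → Fin 2) (Fin n → Fin 2) ℂ}

theorem conjTranspose_eq (hM : IsSignedPauli M) : Mᴴ = M := by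
  obtain ⟨ε, a, hε, rfl⟩ := hM
  rw [conjTranspose_smul, pauliTensor_conjTranspose]
  rcases hε with rfl | rfl <;> simp

theorem mul_self (hM : IsSignedPauli M) : M * M = 1 := by
  obtain ⟨ε, a, hε, rfl⟩ := hM
  rw [smul_mul_smul_comm, pauliTensor_mul_self]
  rcases hε with rfl | rfl <;> simp

theorem trace_eq_zero (hM : IsSignedPauli M) (h₁ : M ≠ 1) (h₂ : M ≠ -1) : M.trace = 0 := by
  obtain ⟨ε, a, hε, rfl⟩ := hM
  obtain rfl | ha := eq_or_ne a 0
  · rcases hε with rfl | rfl <;> simp_all [pauliTensor_zero]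
  · rw [trace_smul, trace_pauliTensor_of_ne_zero ha, smul_zero]

end IsSignedPauli

end Pauli

theorem Finset.sum_mul_sum_self_eq_card_nsmul {R : Type*} [Semiring R] {F : Finset R}
    (hmul : ∀ x ∈ F, ∀ y ∈ F, x * y ∈ F) (hsq : ∀ x ∈ F, x * x = 1) :
    (∑ x ∈ F, x) * (∑ x ∈ F, x) = F.card • ∑ x ∈ F, x := by
  have hleft : ∀ x ∈ F, ∑ y ∈ F, x * y = ∑ y ∈ F, y := fun x hx =>
    Finset.sum_nbij' (x * ·) (x * ·) (hmul x hx) (hmul x hx)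
      (fun y _ => by simp only [← mul_assoc, hsq x hx, one_mul])
      (fun y _ => by simp only [← mul_assoc, hsq x hx, one_mul]) (fun _ _ => rfl)
  rw [Finset.sum_mul_sum, Finset.sum_congr rfl hleft, Finset.sum_const]

namespace IsStabilizerGroup

variable {n : ℕ} {S : Set (Matrix (Fin n → Fin 2) (Fin n → Fin 2) ℂ)}

theorem finite (hS : IsStabilizerGroup n S) : S.Finite :=
  Set.finite_of_ncard_ne_zero (by simp [hS.card_eq])

theorem stabState_eq_sum (hS : IsStabilizerGroup n S) :
    stabState S = ((2 : ℂ) ^ n)⁻¹ • ∑ Q ∈ hS.finite.toFinset, Q := by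
  rw [stabState, ← finsum_mem_coe_finset, Set.Finite.coe_toFinset]

theorem stabState_isHermitian (hS : IsStabilizerGroup n S) : (stabState S).IsHermitian := by
  rw [stabState_eq_sum hS]
  refine IsHermitian.smul (isHermitian_iff_isSelfAdjoint.mpr (isSelfAdjoint_sum _ fun Q hQ => ?_))
    (by simp [IsSelfAdjoint])
  exact (hS.mem_pauli Q (hS.finite.mem_toFinset.mp hQ)).conjTranspose_eq

theorem stabState_mul_self (hS : IsStabilizerGroup n S) :
    stabState S * stabState S = stabState S := by
  have hsum_sq := Finset.sum_mul_sum_self_eq_card_nsmul (F := hS.finite.toFinset)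
    (by simpa using hS.mul_mem) (by simpa using fun Q hQ => (hS.mem_pauli Q hQ).mul_self)
  rw [← Set.ncard_eq_toFinset_card S hS.finite, hS.card_eq] at hsum_sq
  rw [stabState_eq_sum hS, smul_mul_smul_comm, hsum_sq, ← Nat.cast_smul_eq_nsmul ℂ, smul_smul]
  congr 1
  push_cast
  field_simp

theorem trace_stabState (hS : IsStabilizerGroup n S) : (stabState S).trace = 1 := by
  have htrace : ∑ Q ∈ hS.finite.toFinset, Q.trace = (2 : ℂ) ^ n := by
    rw [Finset.sum_eq_single_of_mem 1 (by simpa using hS.one_mem)]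
    · simp
    · intro Q hQ hQ₁
      rw [Set.Finite.mem_toFinset] at hQ
      exact (hS.mem_pauli Q hQ).trace_eq_zero hQ₁ fun h => hS.neg_one_not_mem (h ▸ hQ)
  rw [stabState_eq_sum hS, trace_smul, trace_sum, htrace, smul_eq_mul,
    inv_mul_cancel₀ (pow_ne_zero n two_ne_zero)]

end IsStabilizerGroup

theorem stabState_isPure_general {n : ℕ}
    (S : Set (Matrix (Fin n → Fin 2) (Fin n → Fin 2) ℂ))
    (hS : IsStabilizerGroup n S) :
    (stabState S).IsHermitian ∧
      stabState S * stabState S = stabState S ∧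
      (stabState S).trace = 1 ∧
      (stabState S).rank = 1 := by
  have hidem := hS.stabState_mul_self
  refine ⟨hS.stabState_isHermitian, hidem, hS.trace_stabState, ?_⟩
  exact_mod_cast (rank_eq_trace_of_isIdempotentElem hidem).trans hS.trace_stabState

/-- The stabilizer state `ρ_S = 2^{-n} Σ_{Q ∈ S} Q` of a stabilizer group `S` is Hermitian,
idempotent, of trace `1` and of rank `1`: it is the density matrix of a pure quantum state. -/
theorem stabState_isPure {n : ℕ} (hn : 1 ≤ n)
    (S : Set (Matrix (Fin n → Fin 2) (Fin n → Fin 2) ℂ))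
    (hS : IsStabilizerGroup n S) :
    (stabState S).IsHermitian ∧
      stabState S * stabState S = stabState S ∧
      (stabState S).trace = 1 ∧
      (stabState S).rank = 1 :=
  stabState_isPure_general S hS
end
end

section
/- Let n ≥ 1, let S and S' be stabilizer groups of n-qubit signed Pauli matrices, and let ρ_S := 2^{-n} Σ_{Q ∈ S} Q and ρ_{S'} := 2^{-n} Σ_{Q ∈ S'} Q. Writing −S' := {−Q : Q ∈ S'}, one has (1/(2·4^n)) · Σ_{(ε,a)} tr(P_{ε,a} · ρ_S) · tr(P_{ε,a} · ρ_{S'}) = 4^{-n} · (|S ∩ S'| − |S ∩ (−S')|), where the sum ranges over all pairs (ε,a) with ε ∈ {1,−1} and a : Fin n → Fin 4. -/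
/-! The Pauli tensors are orthogonal for the trace form, `tr (P_a P_b) = 2^n δ_ab`, hence
`∑_a tr (P_a A) tr (P_a B) = 2^n tr (A B)` for every `A` in their span, in particular for
`A = ρ_S`. Both signs `ε = ±1` contribute the same amount. For signed Paulis, `tr (Q Q')` is
`2^n` if `Q' = Q`, `-2^n` if `Q' = -Q` and `0` otherwise, so `4^n tr (ρ_S ρ_S')` counts
`S ∩ S'` minus `S ∩ (-S')`. -/

open Matrix

noncomputable section

open scoped Pointwise

namespace Matrix

variable {ι m n p R : Type*} [Fintype ι] [CommSemiring R]

def piKron (A : ι → Matrix m n R) : Matrix (ι → m) (ι → n) R :=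
  fun z w => ∏ i, A i (z i) (w i)

theorem piKron_mul [DecidableEq ι] [Fintype n] (A : ι → Matrix m n R) (B : ι → Matrix n p R) :
    piKron A * piKron B = piKron fun i => A i * B i := by
  ext z w
  simp only [piKron, mul_apply, Fintype.prod_sum, Finset.prod_mul_distrib]

theorem trace_piKron [DecidableEq ι] [Fintype n] (A : ι → Matrix n n R) :
    (piKron A).trace = ∏ i, (A i).trace := by
  simp only [trace, diag, piKron, Fintype.prod_sum]

end Matrix

theorem pauliTensor_eq_piKron {n : ℕ} (a : Fin n → Fin 4) :
    pauliTensor a = piKron fun i => pauli (a i) := rfl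

theorem trace_pauli_mul_pauli (j k : Fin 4) :
    (pauli j * pauli k).trace = if j = k then 2 else 0 := by
  fin_cases j <;> fin_cases k <;>
    simp [pauli, one_fin_two, trace_fin_two, Complex.I_mul_I] <;> norm_num

theorem trace_pauliTensor_mul_pauliTensor {n : ℕ} (a b : Fin n → Fin 4) :
    (pauliTensor a * pauliTensor b).trace = if a = b then 2 ^ n else 0 := by
  simp only [pauliTensor_eq_piKron, piKron_mul, trace_piKron, trace_pauli_mul_pauli,
    Finset.prod_ite_zero, Finset.prod_const, Finset.card_univ, Fintype.card_fin,
    Finset.mem_univ, true_implies, funext_iff]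


theorem pauliTensor_ne_zero {n : ℕ} (a : Fin n → Fin 4) : pauliTensor a ≠ 0 := by
  intro h
  have := trace_pauliTensor_mul_pauliTensor a a
  simp only [h, zero_mul, trace_zero, if_pos] at this
  exact pow_ne_zero n two_ne_zero this.symm

theorem eq_of_smul_pauliTensor_eq_smul {n : ℕ} {τ σ : ℂ} {b c : Fin n → Fin 4} (hτ : τ ≠ 0)
    (h : τ • pauliTensor b = σ • pauliTensor c) : b = c := by
  by_contra hbc
  have := congrArg (fun M => (pauliTensor b * M).trace) h
  simp [trace_pauliTensor_mul_pauliTensor, hbc, hτ] at this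

theorem IsSignedPauli.trace_mul {n : ℕ} {Q Q' : Matrix (Fin n → Fin 2) (Fin n → Fin 2) ℂ}
    (hQ : IsSignedPauli Q) (hQ' : IsSignedPauli Q') :
    (Q * Q').trace = (if Q' = Q then 2 ^ n else 0) - (if Q' = -Q then 2 ^ n else 0) := by
  obtain ⟨ε, b, hε, rfl⟩ := hQ
  obtain ⟨ε', c, hε', rfl⟩ := hQ'
  rw [Matrix.smul_mul, Matrix.mul_smul, trace_smul, trace_smul, trace_pauliTensor_mul_pauliTensor]
  by_cases hbc : b = c
  · subst hbc
    -- `Matrix` carries no `IsAddTorsionFree` instance; the one on functions applies.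
    have hb : -pauliTensor b ≠ pauliTensor b :=
      (neg_eq_self (G := (Fin n → Fin 2) → (Fin n → Fin 2) → ℂ)).not.mpr
        (pauliTensor_ne_zero b)
    rcases hε with rfl | rfl <;> rcases hε' with rfl | rfl <;> simp [hb, hb.symm]
  · have hε'0 : ε' ≠ 0 := by rcases hε' with rfl | rfl <;> norm_num
    rw [if_neg hbc, smul_zero, smul_zero, if_neg, if_neg, sub_zero]
    · rw [← neg_smul]
      exact fun h => hbc (eq_of_smul_pauliTensor_eq_smul hε'0 h).symm
    · exact fun h => hbc (eq_of_smul_pauliTensor_eq_smul hε'0 h).symm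

theorem IsSignedPauli.mem_span {n : ℕ} {Q : Matrix (Fin n → Fin 2) (Fin n → Fin 2) ℂ}
    (hQ : IsSignedPauli Q) : Q ∈ Submodule.span ℂ (Set.range pauliTensor) := by
  obtain ⟨ε, b, -, rfl⟩ := hQ
  exact Submodule.smul_mem _ ε (Submodule.subset_span ⟨b, rfl⟩)

theorem sum_trace_pauliTensor_mul_mul_of_mem_span {n : ℕ}
    {A : Matrix (Fin n → Fin 2) (Fin n → Fin 2) ℂ}
    (hA : A ∈ Submodule.span ℂ (Set.range pauliTensor))
    (B : Matrix (Fin n → Fin 2) (Fin n → Fin 2) ℂ) :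
    ∑ a, (pauliTensor a * A).trace * (pauliTensor a * B).trace = 2 ^ n * (A * B).trace := by
  induction hA using Submodule.span_induction with
  | mem M hM =>
    obtain ⟨b, rfl⟩ := hM
    simp [trace_pauliTensor_mul_pauliTensor, ite_mul]
  | zero => simp
  | add M M' _ _ hM hM' => simp [mul_add, add_mul, Finset.sum_add_distrib, hM, hM']
  | smul c M _ hM =>
    simp only [Matrix.mul_smul, Matrix.smul_mul, trace_smul, smul_eq_mul, mul_assoc,
      ← Finset.mul_sum, hM]
    ring

theorem sum_sum_trace_mul_of_isSignedPauli {n : ℕ}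
    {s t : Finset (Matrix (Fin n → Fin 2) (Fin n → Fin 2) ℂ)}
    (hs : ∀ Q ∈ s, IsSignedPauli Q) (ht : ∀ Q ∈ t, IsSignedPauli Q) :
    ∑ Q ∈ s, ∑ Q' ∈ t, (Q * Q').trace = 2 ^ n * ((s ∩ t).card - (s ∩ -t).card : ℂ) := by
  calc ∑ Q ∈ s, ∑ Q' ∈ t, (Q * Q').trace
      = ∑ Q ∈ s, ∑ Q' ∈ t, ((if Q' = Q then 2 ^ n else 0) - (if Q' = -Q then 2 ^ n else 0)) :=
        Finset.sum_congr rfl fun Q hQ => Finset.sum_congr rfl fun Q' hQ' =>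
          (hs Q hQ).trace_mul (ht Q' hQ')
    _ = ∑ Q ∈ s, ((if Q ∈ t then 2 ^ n else 0) - (if Q ∈ -t then 2 ^ n else 0)) := by
        simp [Finset.sum_sub_distrib, Finset.mem_neg']
    _ = 2 ^ n * ((s ∩ t).card - (s ∩ -t).card : ℂ) := by
        simp only [Finset.sum_sub_distrib, Finset.sum_ite_mem, Finset.sum_const, nsmul_eq_mul]
        ring

theorem IsStabilizerGroup.finite_s4 {n : ℕ} {S : Set (Matrix (Fin n → Fin 2) (Fin n → Fin 2) ℂ)}
    (hS : IsStabilizerGroup n S) : S.Finite :=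
  Set.finite_of_ncard_ne_zero (by rw [hS.card_eq]; positivity)

theorem stabState_coe {n : ℕ} (s : Finset (Matrix (Fin n → Fin 2) (Fin n → Fin 2) ℂ)) :
    stabState (n := n) s = ((2 : ℂ) ^ n)⁻¹ • ∑ Q ∈ s, Q := by
  rw [stabState, finsum_mem_coe_finset]

theorem stabState_mem_span {n : ℕ} {s : Finset (Matrix (Fin n → Fin 2) (Fin n → Fin 2) ℂ)}
    (hs : ∀ Q ∈ s, IsSignedPauli Q) :
    stabState (n := n) s ∈ Submodule.span ℂ (Set.range pauliTensor) := by
  rw [stabState_coe]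
  exact Submodule.smul_mem _ _ (Submodule.sum_mem _ fun Q hQ => (hs Q hQ).mem_span)

theorem trace_stabState_mul_stabState {n : ℕ}
    {s t : Finset (Matrix (Fin n → Fin 2) (Fin n → Fin 2) ℂ)}
    (hs : ∀ Q ∈ s, IsSignedPauli Q) (ht : ∀ Q ∈ t, IsSignedPauli Q) :
    (stabState (n := n) s * stabState (n := n) t).trace =
      ((2 : ℂ) ^ n)⁻¹ * ((s ∩ t).card - (s ∩ -t).card) := by
  rw [stabState_coe, stabState_coe, Matrix.smul_mul, Matrix.mul_smul, trace_smul, trace_smul,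
    Finset.sum_mul_sum, trace_sum]
  simp_rw [trace_sum]
  rw [sum_sum_trace_mul_of_isSignedPauli hs ht, smul_eq_mul, smul_eq_mul]
  field_simp

theorem stabState_correlation_eq_general {n : ℕ}
    (S S' : Set (Matrix (Fin n → Fin 2) (Fin n → Fin 2) ℂ))
    (hS : IsStabilizerGroup n S) (hS' : IsStabilizerGroup n S') :
    (1 / (2 * 4 ^ n) : ℂ) *
        ∑ ε ∈ ({1, -1} : Finset ℂ), ∑ a : Fin n → Fin 4,
          ((ε • pauliTensor a) * stabState S).trace *
            ((ε • pauliTensor a) * stabState S').trace =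
      ((4 : ℂ) ^ n)⁻¹ *
        (((S ∩ S').ncard : ℂ) - ((S ∩ ((fun Q => -Q) '' S')).ncard : ℂ)) := by
  obtain ⟨s, rfl⟩ := hS.finite_s4.exists_finset_coe
  obtain ⟨t, rfl⟩ := hS'.finite_s4.exists_finset_coe
  have hs : ∀ Q ∈ s, IsSignedPauli Q := hS.mem_pauli
  have ht : ∀ Q ∈ t, IsSignedPauli Q := hS'.mem_pauli
  rw [Finset.sum_pair (by norm_num)]
  simp only [one_smul, neg_smul, Matrix.neg_mul, trace_neg, neg_mul_neg]
  rw [sum_trace_pauliTensor_mul_mul_of_mem_span (stabState_mem_span hs),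
    trace_stabState_mul_stabState hs ht, Set.image_neg_eq_neg, ← Finset.coe_neg,
    ← Finset.coe_inter, ← Finset.coe_inter, Set.ncard_coe_finset, Set.ncard_coe_finset]
  have h4 : (4 : ℂ) ^ n = 2 ^ n * 2 ^ n := by rw [← mul_pow]; norm_num
  rw [h4]
  field_simp
  ring

/-- Correlation of two stabilizer states under the uniform distribution on Pauli
measurements, in terms of stabilizer-group intersections:
`(1/(2·4^n)) Σ_{(ε,a)} tr(P_{ε,a} ρ_S)·tr(P_{ε,a} ρ_{S'}) = 4^{-n}(|S ∩ S'| − |S ∩ (−S')|)`. -/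
theorem stabState_correlation_eq {n : ℕ} (hn : 1 ≤ n)
    (S S' : Set (Matrix (Fin n → Fin 2) (Fin n → Fin 2) ℂ))
    (hS : IsStabilizerGroup n S) (hS' : IsStabilizerGroup n S') :
    (1 / (2 * 4 ^ n) : ℂ) *
        ∑ ε ∈ ({1, -1} : Finset ℂ), ∑ a : Fin n → Fin 4,
          ((ε • pauliTensor a) * stabState S).trace *
            ((ε • pauliTensor a) * stabState S').trace =
      ((4 : ℂ) ^ n)⁻¹ *
        (((S ∩ S').ncard : ℂ) - ((S ∩ ((fun Q => -Q) '' S')).ncard : ℂ)) :=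
  stabState_correlation_eq_general S S' hS hS'
end
end

section
/- Let n ≥ 1. Let ρ := (e₀e₀*)^{⊗n} be the n-fold Kronecker power of the 2×2 matrix !![1,0;0,0], and let ρ' := (e₀e₀*)^{⊗(n−1)} ⊗ ((1/2)·!![1,1;1,1]) (i.e., the state |0⟩⟨0|^{⊗(n−1)} ⊗ |+⟩⟨+|). Then (1/(2·4^n)) · Σ_{(ε,a)} tr(P_{ε,a} · ρ) · tr(P_{ε,a} · ρ') = 2^{-(n+1)}, where the sum ranges over all pairs (ε,a) with ε ∈ {1,−1} and a : Fin n → Fin 4. In particular the correlation bound 2^{-(n+1)} between distinct stabilizer states under the uniform distribution on Pauli measurements is attained. -/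
open Matrix

noncomputable section

/-- The single-qubit state `|0⟩⟨0|`. -/
def ketZero : Matrix (Fin 2) (Fin 2) ℂ := !![1, 0; 0, 0]

/-- The single-qubit state `|+⟩⟨+|`. -/
def ketPlus : Matrix (Fin 2) (Fin 2) ℂ := (2 : ℂ)⁻¹ • !![1, 1; 1, 1]

/-- The `n`-qubit product state `τ₁ ⊗ ⋯ ⊗ τₙ` as a matrix indexed by bit strings. -/
def prodState {n : ℕ} (τ : Fin n → Matrix (Fin 2) (Fin 2) ℂ) :
    Matrix (Fin n → Fin 2) (Fin n → Fin 2) ℂ :=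
  Matrix.of fun z w => ∏ i, τ i (z i) (w i)

/-! Both traces factor over the qubits, and the Pauli matrices are orthogonal for the trace
form, so `∑ₐ tr(Pₐ ρ) tr(Pₐ ρ') = 2ⁿ tr(ρ ρ')` for product states. Here `tr(ρ ρ') = 1/2`, the
overlap of `|0⟩` and `|+⟩`, and the two signs contribute equally. -/

lemma trace_pauliTensor_mul_prodState {n : ℕ} (a : Fin n → Fin 4)
    (τ : Fin n → Matrix (Fin 2) (Fin 2) ℂ) :
    (pauliTensor a * prodState τ).trace = ∏ i, (pauli (a i) * τ i).trace := by
  simp only [Matrix.trace, Matrix.diag, Matrix.mul_apply, Fintype.prod_sum]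
  simp [pauliTensor, prodState, Finset.prod_mul_distrib]

/-- Completeness of the Pauli basis: `{A_k / √2}` is orthonormal for `(σ, τ) ↦ tr(σ τ)`. -/
lemma sum_pauli_trace_mul_trace (σ τ : Matrix (Fin 2) (Fin 2) ℂ) :
    ∑ k, (pauli k * σ).trace * (pauli k * τ).trace = 2 * (σ * τ).trace := by
  simp [Fin.sum_univ_four, pauli, Matrix.trace_fin_two, Matrix.mul_apply]
  linear_combination
    (σ 0 1 * τ 0 1 + σ 1 0 * τ 1 0 - σ 0 1 * τ 1 0 - σ 1 0 * τ 0 1) * Complex.I_sq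

lemma sum_trace_pauliTensor_mul_prodState {n : ℕ} (σ τ : Fin n → Matrix (Fin 2) (Fin 2) ℂ) :
    ∑ a : Fin n → Fin 4, (pauliTensor a * prodState σ).trace * (pauliTensor a * prodState τ).trace =
      2 ^ n * ∏ i, (σ i * τ i).trace := by
  simp_rw [trace_pauliTensor_mul_prodState, ← Finset.prod_mul_distrib]
  rw [← Fintype.prod_sum fun i k => (pauli k * σ i).trace * (pauli k * τ i).trace]
  simp [sum_pauli_trace_mul_trace, Finset.prod_mul_distrib]

lemma trace_ketZero_mul_ketZero : (ketZero * ketZero).trace = 1 := by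
  simp [ketZero, Matrix.trace_fin_two]

lemma trace_ketZero_mul_ketPlus : (ketZero * ketPlus).trace = 2⁻¹ := by
  simp [ketZero, ketPlus, Matrix.trace_fin_two]

/-- The correlation bound `2^{-(n+1)}` between distinct stabilizer states under the uniform
distribution on Pauli measurements is attained by `|0⟩⟨0|^{⊗n}` and
`|0⟩⟨0|^{⊗(n−1)} ⊗ |+⟩⟨+|`. -/
theorem correlation_bound_tight {n : ℕ} (hn : 1 ≤ n) :
    (1 / (2 * 4 ^ n) : ℂ) *
        ∑ ε ∈ ({1, -1} : Finset ℂ), ∑ a : Fin n → Fin 4,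
          ((ε • pauliTensor a) * prodState (fun _ => ketZero)).trace *
            ((ε • pauliTensor a) *
              prodState (fun i => if (i : ℕ) = n - 1 then ketPlus else ketZero)).trace =
      ((2 : ℂ) ^ (n + 1))⁻¹ := by
  set last : Fin n := ⟨n - 1, by omega⟩
  have h_overlap : ∏ i : Fin n,
      (ketZero * if (i : ℕ) = n - 1 then ketPlus else ketZero).trace = 2⁻¹ := by
    have h_last (i : Fin n) : (i : ℕ) = n - 1 ↔ i = last := by simp [last, Fin.ext_iff]
    simp [h_last, apply_ite, trace_ketZero_mul_ketPlus, trace_ketZero_mul_ketZero]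
  simp only [Matrix.smul_mul, Matrix.trace_smul, smul_eq_mul, mul_mul_mul_comm,
    ← Finset.mul_sum, sum_trace_pauliTensor_mul_prodState, h_overlap]
  rw [Finset.sum_pair (by norm_num), pow_succ,
    show (4 : ℂ) ^ n = 2 ^ n * 2 ^ n by rw [← mul_pow]; norm_num]
  field_simp
  ring
end
end
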